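/- arXiv:1308.2677 — 2 statements merged into one kernel-verified Lean document; each statement's English description precedes it below -/
import Mathlib

section
/- Reversibility of a cycle is well-defined: let C be a directed cycle in a ribbon graph G. If (ρ̄′, v′) is reachable from (ρ′, v′) by rotor-routing for some unicycle (ρ′, v′) with C(ρ′) = C, then (ρ̄, v) is reachable from (ρ, v) for every unicycle (ρ, v) with C(ρ) = C. (Here ρ̄ denotes ρ with the edges of C reversed.) -/
/-- A ribbon graph: a finite connected multigraph without self-loops, presented
by darts (directed half-edges), together with a cyclic ordering `next` of the
darts based at each vertex. -/
structure RibbonGraph where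
  V : Type
  D : Type
  fV : Fintype V
  dV : DecidableEq V
  fD : Fintype D
  dD : DecidableEq D
  nV : Nonempty V
  src : D → V
  rev : D → D
  rev_rev : ∀ d, rev (rev d) = d
  no_loop : ∀ d, src (rev d) ≠ src d
  next : Equiv.Perm D
  src_next : ∀ d, src (next d) = src d
  next_cyclic : ∀ d e, src d = src e → ∃ n : ℕ, (⇑next)^[n] d = e
  conn : ∀ u v : V,
    Relation.ReflTransGen (fun a b => ∃ d, src d = a ∧ src (rev d) = b) u v

attribute [instance] RibbonGraph.fV RibbonGraph.dV RibbonGraph.fD RibbonGraph.dD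

namespace RibbonGraph

variable (G : RibbonGraph)

/-- The endpoint of a dart. -/
def tgt (d : G.D) : G.V := G.src (G.rev d)

/-- A rotor configuration: an outgoing dart at every vertex. -/
def RotorConfig := {ρ : G.V → G.D // ∀ v, G.src (ρ v) = v}

/-- One step of the rotor-routing process: advance the rotor at the chip's
position to the next dart in the cyclic order, then move the chip along it. -/
def rrStep (p : G.RotorConfig × G.V) : G.RotorConfig × G.V :=
  (⟨fun v => if v = p.2 then G.next (p.1.1 p.2) else p.1.1 v, by
      intro v
      simp only []
      by_cases h : v = p.2
      · rw [if_pos h, G.src_next, p.1.2, h]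
      · rw [if_neg h]
        exact p.1.2 v⟩,
    G.tgt (G.next (p.1.1 p.2)))

/-- The functional graph of a rotor configuration: follow the rotor. -/
def cfgStep (ρ : G.RotorConfig) (v : G.V) : G.V := G.tgt (ρ.1 v)

/-- A vertex is periodic (lies on a directed cycle of the rotor configuration). -/
def Periodic (ρ : G.RotorConfig) (v : G.V) : Prop :=
  ∃ n : ℕ, 0 < n ∧ (G.cfgStep ρ)^[n] v = v

/-- A unicycle: a rotor configuration with exactly one directed cycle, together
with a chip position on that cycle. -/
def Unicycle (p : G.RotorConfig × G.V) : Prop :=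
  G.Periodic p.1 p.2 ∧
    ∀ u w, G.Periodic p.1 u → G.Periodic p.1 w → ∃ n : ℕ, (G.cfgStep p.1)^[n] u = w

/-- `(σ, y)` is reachable from `(ρ, x)` by a positive number of rotor-routing steps. -/
def Reaches (p q : G.RotorConfig × G.V) : Prop :=
  ∃ n : ℕ, 0 < n ∧ (G.rrStep)^[n] p = q

/-- `σ` is obtained from `ρ` by reversing the directed cycle(s) of `ρ` and keeping
all other rotors: off the cycle the rotors agree, and the rotor of `σ` at the head
of a cycle dart of `ρ` is that dart reversed. -/
def IsReversal (ρ σ : G.RotorConfig) : Prop :=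
  (∀ v, ¬ G.Periodic ρ v → σ.1 v = ρ.1 v) ∧
  (∀ v, G.Periodic ρ v → σ.1 (G.tgt (ρ.1 v)) = G.rev (ρ.1 v))

/-- Two rotor configurations have the same directed cycle. -/
def SameCycle (ρ τ : G.RotorConfig) : Prop :=
  ∀ v, (G.Periodic ρ v ↔ G.Periodic τ v) ∧ (G.Periodic ρ v → ρ.1 v = τ.1 v)

/-- The directed cycle of `ρ` is reversible: from any unicycle whose rotor
configuration has the same directed cycle, the reversed state is reachable. -/
def CycleReversible (ρ : G.RotorConfig) : Prop :=
  ∀ τ v σ, G.SameCycle ρ τ → G.Periodic τ v → G.IsReversal τ σ →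
    G.Reaches (τ, v) (σ, v)

/-- A directed cycle in a ribbon graph: a cyclically closed, vertex-injective,
nonempty list of darts. -/
structure DirCycle where
  darts : List G.D
  ne : darts ≠ []
  chain : darts.Chain' (fun a b => G.tgt a = G.src b)
  wrap : G.tgt (darts.getLast ne) = G.src (darts.head ne)
  nodupV : (darts.map G.src).Nodup

/-- The vertices of a directed cycle. -/
def cverts (C : G.DirCycle) : List G.V := C.darts.map G.src

/-- A dart `e` based at a vertex of `C` lies on the right of `C`: it occurs
strictly after the outgoing dart of `C` and strictly before the reversed
incoming dart of `C` in the cyclic order at its base vertex. -/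
def RightOf (C : G.DirCycle) (e : G.D) : Prop :=
  ∃ dout ∈ C.darts, ∃ din ∈ C.darts,
    G.src dout = G.src e ∧ G.tgt din = G.src e ∧
    ∃ k j : ℕ, 0 < k ∧ k < j ∧ (⇑G.next)^[k] dout = e ∧ (⇑G.next)^[j] dout = G.rev din ∧
      ∀ j', 0 < j' → j' < j → (⇑G.next)^[j'] dout ≠ G.rev din

/-- A dart `e` based at a vertex of `C` lies on the left of `C`: it occurs
strictly after the reversed incoming dart of `C` and strictly before the
outgoing dart of `C` in the cyclic order at its base vertex. -/
def LeftOf (C : G.DirCycle) (e : G.D) : Prop :=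
  ∃ dout ∈ C.darts, ∃ din ∈ C.darts,
    G.src dout = G.src e ∧ G.tgt din = G.src e ∧
    ∃ k j : ℕ, 0 < k ∧ k < j ∧ (⇑G.next)^[k] (G.rev din) = e ∧ (⇑G.next)^[j] (G.rev din) = dout ∧
      ∀ j', 0 < j' → j' < j → (⇑G.next)^[j'] (G.rev din) ≠ dout

/-- A path witnessing that the cycle `C` is nonseparating: an edge-injective path
whose endpoints lie on `C`, which is otherwise disjoint from `C`, whose first
edge is on the left of `C` and whose last edge is on the right of `C`. -/
def IsWitness (C : G.DirCycle) (p : List G.D) : Prop :=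
  ∃ hp : p ≠ [],
    p.Chain' (fun a b => G.tgt a = G.src b) ∧
    G.src (p.head hp) ∈ G.cverts C ∧
    G.tgt (p.getLast hp) ∈ G.cverts C ∧
    (∀ i : Fin p.length, i.1 ≠ 0 → G.src (p.get i) ∉ G.cverts C) ∧
    (∀ i j : Fin p.length, i ≠ j → p.get i ≠ p.get j ∧ p.get i ≠ G.rev (p.get j)) ∧
    G.LeftOf C (p.head hp) ∧
    G.RightOf C (G.rev (p.getLast hp))

/-- The cycle `C` is separating (no witness to the contrary exists). -/
def Separating (C : G.DirCycle) : Prop := ∀ p : List G.D, ¬ G.IsWitness C p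

/-- The ribbon graph is planar: every cycle is separating. -/
def Planar : Prop := ∀ C : G.DirCycle, G.Separating C

/-- `C` is the unique directed cycle of the rotor configuration `ρ`. -/
def IsCycleOf (ρ : G.RotorConfig) (C : G.DirCycle) : Prop :=
  (∀ d ∈ C.darts, ρ.1 (G.src d) = d) ∧ (∀ v, G.Periodic ρ v → v ∈ G.cverts C)

/-- The cycle `C` is reversible: from any unicycle whose unique directed cycle is
`C` and whose chip lies on `C`, the state with `C` reversed is reachable by
rotor-routing. -/
def Reversible (C : G.DirCycle) : Prop :=
  ∀ (ρ : G.RotorConfig) (v : G.V) (σ : G.RotorConfig),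
    G.IsCycleOf ρ C → v ∈ G.cverts C → G.IsReversal ρ σ → G.Reaches (ρ, v) (σ, v)

/-- A spanning tree of a ribbon graph: a `rev`-closed set of darts that connects
all vertices and has the dart count of a tree. -/
structure SpanningTree where
  edges : Finset G.D
  rev_mem : ∀ d ∈ edges, G.rev d ∈ edges
  conn : ∀ u v : G.V,
    Relation.ReflTransGen (fun a b => ∃ d ∈ edges, G.src d = a ∧ G.tgt d = b) u v
  card_eq : edges.card = 2 * (Fintype.card G.V - 1)

/-- `ρ` orients the spanning tree `T` toward the root `r`: away from `r` the
rotors are tree darts, and following the rotors from any vertex reaches `r`. -/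
def TowardRoot (T : G.SpanningTree) (r : G.V) (ρ : G.RotorConfig) : Prop :=
  (∀ v, v ≠ r → ρ.1 v ∈ T.edges) ∧ (∀ v, ∃ n : ℕ, (G.cfgStep ρ)^[n] v = r)

/-- The rotor-routing action of the divisor `v - r` with basepoint `r` sends the
spanning tree `T` to `T'`: orient `T` toward `r`, place the chip at `v`, iterate
rotor-routing until the chip first reaches `r`, and read off the resulting
spanning tree oriented toward `r`.  (The rotor at `r` itself is irrelevant: the
chip is never routed from `r`.) -/
def RRAct (r v : G.V) (T T' : G.SpanningTree) : Prop :=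
  ∃ ρ : G.RotorConfig, G.TowardRoot T r ρ ∧
    ∃ n : ℕ, (∀ k, k < n → ((G.rrStep)^[k] (ρ, v)).2 ≠ r) ∧
      ((G.rrStep)^[n] (ρ, v)).2 = r ∧
      G.TowardRoot T' r ((G.rrStep)^[n] (ρ, v)).1

/-- The divisor `v - r` as a function on vertices. -/
def genDiv (v r : G.V) : G.V → ℤ :=
  fun w => (if w = v then (1 : ℤ) else 0) - (if w = r then 1 else 0)

/-- The rotor-routing action of an arbitrary divisor `D ∈ Div⁰(G)` with basepoint
`r` on spanning trees, generated by the actions of the divisors `v - r` and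
their inverses. -/
inductive DivAct (r : G.V) : (G.V → ℤ) → G.SpanningTree → G.SpanningTree → Prop
  | zero (T : G.SpanningTree) : DivAct r 0 T T
  | step (v : G.V) (D : G.V → ℤ) (T T' T'' : G.SpanningTree) :
      DivAct r D T T' → G.RRAct r v T' T'' → DivAct r (D + G.genDiv v r) T T''
  | inv (v : G.V) (D : G.V → ℤ) (T T' T'' : G.SpanningTree) :
      DivAct r D T T' → G.RRAct r v T'' T' → DivAct r (D - G.genDiv v r) T T''

end RibbonGraph

/-!
Let `k u` be the number of times the chip leaves `u` during the given run from `(ρ', v')` to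
`(ρ̄', v')`. Off the cycle the rotor at `u` ends where it started, so `k u` is a multiple of the
period of the rotor; hence the firing vector `k` produces the same arrivals from every
configuration with cycle `C`, it is balanced (arrivals equal departures, the chip having
returned to its start), and it advances `ρ` to `ρ̄`. The rotors of `ρ̄` lead every vertex to `v`.
This forces the rotor walk from `(ρ, v)` never to fire a vertex more than `k` times. Were the
chip at a vertex `x` whose budget is used up while some vertex `a` still has budget left, then
conservation of chips at `x` gives `x = v`, with every arrival at `v` prescribed by `k` already
made. But the last firing of `a`, still to come, sends a chip along `ρ̄ a`, so the next vertex
along `ρ̄` is not `v` and has budget left as well; following `ρ̄` from `a` reaches `v`, a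
contradiction. So after `∑ k` steps the walk has fired exactly `k`, and stands at `(ρ̄, v)`.
-/

open Finset Function

namespace Function

variable {α : Type*} {f : α → α}

theorem exists_iterate_mem_periodicPts [Finite α] (f : α → α) (x : α) :
    ∃ m, f^[m] x ∈ periodicPts f := by
  obtain ⟨a, b, hne, heq⟩ := Finite.exists_ne_map_eq_of_infinite (f^[·] x)
  rcases lt_or_gt_of_ne hne with h | h
  · refine ⟨a, mk_mem_periodicPts (n := b - a) (by omega) ?_⟩
    rw [IsPeriodicPt, IsFixedPt, ← iterate_add_apply, Nat.sub_add_cancel h.le, heq]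
  · refine ⟨b, mk_mem_periodicPts (n := a - b) (by omega) ?_⟩
    rw [IsPeriodicPt, IsFixedPt, ← iterate_add_apply, Nat.sub_add_cancel h.le, heq]

theorem exists_iterate_iterate_eq_iterate {x : α} (hx : x ∈ periodicPts f) (a b : ℕ) :
    ∃ n, f^[n] (f^[a] x) = f^[b] x := by
  obtain ⟨p, hp, hpx⟩ := hx
  refine ⟨b + (p - 1) * a, ?_⟩
  have hpa : b + (p - 1) * a + a = b + p * a := by
    rw [add_assoc, ← Nat.succ_mul, Nat.succ_eq_add_one, Nat.sub_add_cancel hp]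
  rw [← iterate_add_apply, hpa, iterate_add_apply, (hpx.mul_const a).eq]

theorem sum_range_iterate_apply_eq {M : Type*} [AddCancelCommMonoid M] {k : ℕ} {x : α}
    (hx : IsPeriodicPt f k x) (g : α → M) :
    ∑ j ∈ range k, g (f^[j] (f x)) = ∑ j ∈ range k, g (f^[j] x) := by
  have hshift := (sum_range_succ' (fun j => g (f^[j] x)) k).symm.trans
    (sum_range_succ (fun j => g (f^[j] x)) k)
  rw [hx.eq] at hshift
  simpa only [iterate_succ_apply] using add_right_cancel hshift

theorem sum_range_iterate_iterate_eq {M : Type*} [AddCancelCommMonoid M] {k : ℕ} {x : α}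
    (hx : IsPeriodicPt f k x) (g : α → M) (m : ℕ) :
    ∑ j ∈ range k, g (f^[j] (f^[m] x)) = ∑ j ∈ range k, g (f^[j] x) := by
  induction m with
  | zero => rfl
  | succ m ih => rw [iterate_succ_apply', sum_range_iterate_apply_eq (hx.apply_iterate m), ih]

end Function

namespace RibbonGraph

variable (G : RibbonGraph)

lemma tgt_rev (d : G.D) : G.tgt (G.rev d) = G.src d := by
  rw [tgt, G.rev_rev]

lemma iterate_next_eq_self_of_src_eq {d d' : G.D} (h : G.src d = G.src d') {k : ℕ}
    (hd' : IsPeriodicPt G.next k d') : IsPeriodicPt G.next k d := by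
  obtain ⟨m, rfl⟩ := G.next_cyclic d' d h.symm
  exact hd'.apply_iterate m

def departures (p : G.RotorConfig × G.V) (t : ℕ) (u : G.V) : ℕ :=
  Nat.count (fun i => (G.rrStep^[i] p).2 = u) t

/-- The number of chips arriving at `u` when every vertex `w`, with rotor `τ w`, routes `k w`
chips: the `j`-th of them (counting from `0`) travels along `next^[j + 1] (τ w)`. -/
def arrivals (τ : G.RotorConfig) (k : G.V → ℕ) (u : G.V) : ℕ :=
  ∑ w, Nat.count (fun j => G.tgt (G.next^[j + 1] (τ.1 w)) = u) (k w)

section Arrivals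

variable (τ : G.RotorConfig)

lemma arrivals_zero : G.arrivals τ 0 = 0 := by
  funext u
  simp only [arrivals, Pi.zero_apply, Nat.count_zero, sum_const_zero]

lemma arrivals_add_single (k : G.V → ℕ) (x : G.V) :
    G.arrivals τ (k + Pi.single x 1)
      = G.arrivals τ k + Pi.single (G.tgt (G.next^[k x + 1] (τ.1 x))) 1 := by
  funext u
  have hterm : ∀ w,
      Nat.count (fun j => G.tgt (G.next^[j + 1] (τ.1 w)) = u) ((k + Pi.single x 1 : G.V → ℕ) w)
        = Nat.count (fun j => G.tgt (G.next^[j + 1] (τ.1 w)) = u) (k w)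
          + if w = x then (if G.tgt (G.next^[k x + 1] (τ.1 x)) = u then 1 else 0) else 0 := by
    intro w
    by_cases hw : w = x
    · subst hw
      rw [Pi.add_apply, Pi.single_eq_same, Nat.count_succ, if_pos rfl]
    · rw [Pi.add_apply, Pi.single_eq_of_ne hw, add_zero, if_neg hw, add_zero]
  rw [Pi.add_apply, Pi.single_comm, Pi.single_apply, arrivals, arrivals,
    Fintype.sum_congr _ _ hterm, sum_add_distrib, sum_ite_eq' univ x, if_pos (mem_univ x)]

lemma arrivals_mono {c k : G.V → ℕ} (h : c ≤ k) : G.arrivals τ c ≤ G.arrivals τ k :=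
  fun _ => sum_le_sum fun w _ => Nat.count_monotone _ (h w)

lemma arrivals_lt_arrivals {c k : G.V → ℕ} (h : c ≤ k) {w : G.V} (hw : c w < k w) :
    G.arrivals τ c (G.tgt (G.next^[k w] (τ.1 w)))
      < G.arrivals τ k (G.tgt (G.next^[k w] (τ.1 w))) := by
  refine sum_lt_sum (fun w' _ => Nat.count_monotone _ (h w')) ⟨w, mem_univ w, ?_⟩
  calc Nat.count _ (c w) ≤ Nat.count _ (k w - 1) := Nat.count_monotone _ (by omega)
    _ < Nat.count _ (k w) := Nat.count_strict_mono (by rw [Nat.sub_add_cancel (by omega)])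
        (by omega)

lemma arrivals_congr {τ' : G.RotorConfig} {k : G.V → ℕ}
    (h : ∀ w, τ.1 w = τ'.1 w ∨ IsPeriodicPt G.next (k w) (τ'.1 w)) :
    G.arrivals τ k = G.arrivals τ' k := by
  funext u
  refine Fintype.sum_congr _ _ fun w => ?_
  rcases h w with hw | hw
  · rw [hw]
  · obtain ⟨m, hm⟩ := G.next_cyclic (τ'.1 w) (τ.1 w) (by rw [τ.2, τ'.2])
    rw [Nat.count_eq_card_filter_range, Nat.count_eq_card_filter_range, card_filter, card_filter]
    simp only [iterate_succ_apply, ← hm, (Commute.self_iterate G.next m).eq]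
    exact sum_range_iterate_iterate_eq hw.apply (fun d => if G.tgt d = u then 1 else 0) m

end Arrivals

section Walk

variable (p : G.RotorConfig × G.V)

lemma departures_zero : G.departures p 0 = 0 := by
  funext u
  exact Nat.count_zero _

lemma departures_succ (t : ℕ) :
    G.departures p (t + 1) = G.departures p t + Pi.single (G.rrStep^[t] p).2 1 := by
  funext u
  rw [Pi.add_apply, Pi.single_comm, Pi.single_apply]
  exact Nat.count_succ _ t

lemma sum_departures (t : ℕ) : ∑ u, G.departures p t u = t := by
  simp only [departures, Nat.count_eq_card_filter_range]
  rw [← card_eq_sum_card_fiberwise (fun i _ => mem_univ _), card_range]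

lemma rrStep_iterate_rotor (t : ℕ) (u : G.V) :
    (G.rrStep^[t] p).1.1 u = G.next^[G.departures p t u] (p.1.1 u) := by
  induction t with
  | zero => rw [departures_zero]; rfl
  | succ t ih =>
    rw [iterate_succ_apply', departures_succ, Pi.add_apply, Pi.single_apply]
    by_cases hu : u = (G.rrStep^[t] p).2
    · rw [if_pos hu, iterate_succ_apply', ← ih, hu]
      exact if_pos rfl
    · rw [if_neg hu, add_zero, ← ih]
      exact if_neg hu

lemma rrStep_iterate_chip_succ (t : ℕ) :
    (G.rrStep^[t + 1] p).2 = G.tgt (G.next^[G.departures p t (G.rrStep^[t] p).2 + 1]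
      (p.1.1 (G.rrStep^[t] p).2)) := by
  rw [iterate_succ_apply', iterate_succ_apply', ← rrStep_iterate_rotor]
  rfl

/-- Conservation of chips: every departure but the first is preceded by an arrival. -/
lemma departures_succ_eq (t : ℕ) :
    G.departures p (t + 1) = Pi.single p.2 1 + G.arrivals p.1 (G.departures p t) := by
  induction t with
  | zero => rw [departures_succ, departures_zero, arrivals_zero, zero_add, add_zero]; rfl
  | succ t ih =>
    calc G.departures p (t + 1 + 1)
        = G.departures p (t + 1) + Pi.single (G.rrStep^[t + 1] p).2 1 := departures_succ ..
      _ = Pi.single p.2 1 + (G.arrivals p.1 (G.departures p t)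
            + Pi.single (G.rrStep^[t + 1] p).2 1) := by rw [ih, add_assoc]
      _ = Pi.single p.2 1 + G.arrivals p.1 (G.departures p (t + 1)) := by
        rw [G.departures_succ p t, arrivals_add_single, rrStep_iterate_chip_succ]

lemma departures_add_ite_eq (t : ℕ) (u : G.V) :
    G.departures p t u + (if u = (G.rrStep^[t] p).2 then 1 else 0)
      = (if u = p.2 then 1 else 0) + G.arrivals p.1 (G.departures p t) u := by
  have := congrFun (G.departures_succ_eq p t) u
  rwa [departures_succ, Pi.add_apply, Pi.add_apply, Pi.single_apply, Pi.single_apply] at this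

end Walk

section BalancedFiring

variable {G} {τ σ : G.RotorConfig} {v : G.V} {k : G.V → ℕ}

lemma departures_lt_at_chip (harr : G.arrivals τ k = k)
    (hrot : ∀ u, G.next^[k u] (τ.1 u) = σ.1 u) (hσ : ∀ x, ∃ n, (G.cfgStep σ)^[n] x = v)
    {t : ℕ} (hle : G.departures (τ, v) t ≤ k) (ht : t < ∑ u, k u) :
    G.departures (τ, v) t (G.rrStep^[t] (τ, v)).2 < k (G.rrStep^[t] (τ, v)).2 := by
  set c := G.departures (τ, v) t
  obtain ⟨x, hx⟩ : ∃ x, (G.rrStep^[t] (τ, v)).2 = x := ⟨_, rfl⟩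
  rw [hx]
  have hflow : ∀ u,
      c u + (if u = x then 1 else 0) = (if u = v then 1 else 0) + G.arrivals τ c u :=
    hx ▸ G.departures_add_ite_eq (τ, v) t
  have harr_le : ∀ u, G.arrivals τ c u ≤ k u := fun u => harr ▸ G.arrivals_mono τ hle u
  by_contra hcx
  replace hcx : c x = k x := le_antisymm (hle x) (not_lt.mp hcx)
  have hxv : x = v := by
    by_contra hxv
    have := hflow x
    rw [if_pos rfl, if_neg hxv] at this
    linarith [harr_le x]
  have harr_x : G.arrivals τ c x = k x := by
    have := hflow x
    rw [if_pos rfl, if_pos hxv] at this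
    omega
  have hclosed : ∀ a, c a < k a → c (G.cfgStep σ a) < k (G.cfgStep σ a) := by
    intro a ha
    have hlt := G.arrivals_lt_arrivals τ hle ha
    rw [hrot, harr] at hlt
    change G.arrivals τ c (G.cfgStep σ a) < k (G.cfgStep σ a) at hlt
    have := hflow (G.cfgStep σ a)
    by_cases hb : G.cfgStep σ a = x
    · rw [hb] at hlt
      omega
    · rw [if_neg hb, if_neg (hxv ▸ hb)] at this
      exact lt_of_le_of_lt (by omega) hlt
  obtain ⟨a, -, ha⟩ := exists_lt_of_sum_lt (by rwa [sum_departures] : ∑ u, c u < ∑ u, k u)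
  obtain ⟨n, hn⟩ := hσ a
  have hiter : ∀ m, c ((G.cfgStep σ)^[m] a) < k ((G.cfgStep σ)^[m] a) := by
    intro m
    induction m with
    | zero => exact ha
    | succ m ih => rw [iterate_succ_apply']; exact hclosed _ ih
  have := hiter n
  rw [hn, ← hxv] at this
  omega

lemma departures_le (harr : G.arrivals τ k = k)
    (hrot : ∀ u, G.next^[k u] (τ.1 u) = σ.1 u) (hσ : ∀ x, ∃ n, (G.cfgStep σ)^[n] x = v)
    {t : ℕ} (ht : t ≤ ∑ u, k u) : G.departures (τ, v) t ≤ k := by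
  induction t with
  | zero => rw [departures_zero]; exact fun u => Nat.zero_le _
  | succ t ih =>
    have hle := ih (by omega)
    have hlt := departures_lt_at_chip harr hrot hσ hle (by omega)
    intro u
    rw [departures_succ, Pi.add_apply, Pi.single_apply]
    split_ifs with hu
    · subst hu; exact hlt
    · exact hle u

theorem rrStep_iterate_sum_eq (harr : G.arrivals τ k = k)
    (hrot : ∀ u, G.next^[k u] (τ.1 u) = σ.1 u) (hσ : ∀ x, ∃ n, (G.cfgStep σ)^[n] x = v) :
    G.rrStep^[∑ u, k u] (τ, v) = (σ, v) := by
  have hle := departures_le harr hrot hσ le_rfl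
  have hk : G.departures (τ, v) (∑ u, k u) = k := funext
    ((sum_eq_sum_iff_of_le fun u _ => hle u).mp (sum_departures ..) · (mem_univ _))
  refine Prod.ext (Subtype.ext (funext fun u => ?_)) ?_
  · rw [rrStep_iterate_rotor, hk, hrot]
  · have := G.departures_add_ite_eq (τ, v) (∑ u, k u) (G.rrStep^[∑ u, k u] (τ, v)).2
    rw [hk, harr, if_pos rfl] at this
    by_contra hxv
    rw [if_neg hxv] at this
    omega

end BalancedFiring

section Reversal

variable {G} {ρ σ ρ' σ' : G.RotorConfig}

lemma IsReversal.cfgStep_cfgStep (hR : G.IsReversal ρ σ) {u : G.V} (hu : G.Periodic ρ u) :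
    G.cfgStep σ (G.cfgStep ρ u) = u := by
  rw [cfgStep, cfgStep, hR.2 u hu, tgt_rev, ρ.2]

lemma IsReversal.eq_of_sameCycle (hR : G.IsReversal ρ σ) (hR' : G.IsReversal ρ' σ')
    (hsame : G.SameCycle ρ' ρ) {w : G.V} (hw : G.Periodic ρ w) : σ.1 w = σ'.1 w := by
  obtain ⟨u, hu, rfl⟩ := (bijOn_periodicPts (G.cfgStep ρ)).surjOn hw
  have hu' : G.Periodic ρ' u := (hsame u).1.mpr hu
  have hρ : ρ'.1 u = ρ.1 u := (hsame u).2 hu'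
  rw [cfgStep, hR.2 u hu, ← hρ, hR'.2 u hu']

/-- Off the cycle the rotors of `σ` are those of `ρ`, which lead into the cycle, and on the cycle
they walk it backwards. -/
theorem IsReversal.exists_iterate_eq (hR : G.IsReversal ρ σ) {v : G.V} (hU : G.Unicycle (ρ, v))
    (x : G.V) : ∃ n, (G.cfgStep σ)^[n] x = v := by
  have hv : G.Periodic ρ v := hU.1
  have hback : ∀ n, (G.cfgStep σ)^[n] ((G.cfgStep ρ)^[n] v) = v := by
    intro n
    induction n with
    | zero => rfl
    | succ n ih =>
      rw [iterate_succ_apply' (G.cfgStep ρ), iterate_succ_apply (G.cfgStep σ),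
        hR.cfgStep_cfgStep ((bijOn_periodicPts _).mapsTo.iterate n hv), ih]
  have hcycle : ∀ w, G.Periodic ρ w → ∃ n, (G.cfgStep σ)^[n] w = v := by
    intro w hw
    obtain ⟨n, rfl⟩ := hU.2 v w hv hw
    exact ⟨n, hback n⟩
  have htail : ∀ m y, G.Periodic ρ ((G.cfgStep ρ)^[m] y) → ∃ n, (G.cfgStep σ)^[n] y = v := by
    intro m
    induction m with
    | zero => exact hcycle
    | succ m ih =>
      intro y hy
      by_cases hyc : G.Periodic ρ y
      · exact hcycle y hyc
      · obtain ⟨n, hn⟩ := ih (G.cfgStep ρ y) hy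
        refine ⟨n + 1, ?_⟩
        rwa [iterate_succ_apply, cfgStep, hR.1 y hyc]
  obtain ⟨m, hm⟩ := exists_iterate_mem_periodicPts (G.cfgStep ρ) x
  exact htail m x hm

theorem Reaches.reversal_of_sameCycle {v' v : G.V} (hreach : G.Reaches (ρ', v') (σ', v'))
    (hR' : G.IsReversal ρ' σ') (hsame : G.SameCycle ρ' ρ) (hU : G.Unicycle (ρ, v))
    (hR : G.IsReversal ρ σ) : G.Reaches (ρ, v) (σ, v) := by
  obtain ⟨n, hn, hrun⟩ := hreach
  set k := G.departures (ρ', v') n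
  have hrot' : ∀ u, G.next^[k u] (ρ'.1 u) = σ'.1 u := fun u => by
    rw [← rrStep_iterate_rotor, hrun]
  have hturn : ∀ u, ¬ G.Periodic ρ' u → IsPeriodicPt G.next (k u) (ρ'.1 u) := fun u hu =>
    (hrot' u).trans (hR'.1 u hu)
  have harr' : G.arrivals ρ' k = k := by
    have hflow := G.departures_succ_eq (ρ', v') n
    rwa [departures_succ, hrun, add_comm, add_left_cancel_iff, eq_comm] at hflow
  have harr : G.arrivals ρ k = k := by
    refine (G.arrivals_congr ρ fun u => ?_).trans harr'
    by_cases hu : G.Periodic ρ' u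
    · exact .inl ((hsame u).2 hu).symm
    · exact .inr (hturn u hu)
  have hrot : ∀ u, G.next^[k u] (ρ.1 u) = σ.1 u := by
    intro u
    by_cases hu : G.Periodic ρ' u
    · rw [← (hsame u).2 hu, hrot', hR.eq_of_sameCycle hR' hsame ((hsame u).1.mp hu)]
    · rw [hR.1 u ((hsame u).1.not.mp hu)]
      exact G.iterate_next_eq_self_of_src_eq (by rw [ρ.2, ρ'.2]) (hturn u hu)
  refine ⟨∑ u, k u, ?_, rrStep_iterate_sum_eq harr hrot (hR.exists_iterate_eq hU)⟩
  rwa [sum_departures]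

end Reversal

namespace IsCycleOf

variable {G} {C : G.DirCycle} {ρ : G.RotorConfig}

lemma iterate_src_head (hC : G.IsCycleOf ρ C) {j : ℕ} (hj : j < C.darts.length) :
    (G.cfgStep ρ)^[j] (G.src (C.darts.head C.ne)) = G.src C.darts[j] := by
  induction j with
  | zero => rw [iterate_zero_apply, List.head_eq_getElem]
  | succ j ih =>
    rw [iterate_succ_apply', ih (by omega), cfgStep, hC.1 _ (List.getElem_mem _)]
    exact List.isChain_iff_getElem.mp C.chain j hj

lemma src_head_mem_periodicPts (hC : G.IsCycleOf ρ C) :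
    G.src (C.darts.head C.ne) ∈ periodicPts (G.cfgStep ρ) := by
  have hpos := List.length_pos_iff.mpr C.ne
  refine mk_mem_periodicPts hpos ?_
  rw [IsPeriodicPt, IsFixedPt, ← Nat.sub_add_cancel hpos, iterate_succ_apply',
    hC.iterate_src_head (Nat.sub_lt hpos Nat.one_pos), cfgStep, hC.1 _ (List.getElem_mem _),
    ← List.getLast_eq_getElem C.ne, C.wrap]

lemma exists_iterate_src_head_eq (hC : G.IsCycleOf ρ C) {u : G.V} (hu : u ∈ G.cverts C) :
    ∃ j, (G.cfgStep ρ)^[j] (G.src (C.darts.head C.ne)) = u := by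
  obtain ⟨d, hd, rfl⟩ := List.mem_map.mp hu
  obtain ⟨j, hj, rfl⟩ := List.getElem_of_mem hd
  exact ⟨j, hC.iterate_src_head hj⟩

lemma periodic_iff (hC : G.IsCycleOf ρ C) {u : G.V} : G.Periodic ρ u ↔ u ∈ G.cverts C := by
  refine ⟨hC.2 u, fun hu => ?_⟩
  obtain ⟨j, rfl⟩ := hC.exists_iterate_src_head_eq hu
  exact (bijOn_periodicPts _).mapsTo.iterate j hC.src_head_mem_periodicPts

lemma unicycle (hC : G.IsCycleOf ρ C) {v : G.V} (hv : v ∈ G.cverts C) : G.Unicycle (ρ, v) := by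
  refine ⟨hC.periodic_iff.mpr hv, fun u w hu hw => ?_⟩
  obtain ⟨a, rfl⟩ := hC.exists_iterate_src_head_eq (hC.2 u hu)
  obtain ⟨b, rfl⟩ := hC.exists_iterate_src_head_eq (hC.2 w hw)
  exact exists_iterate_iterate_eq_iterate hC.src_head_mem_periodicPts a b

lemma sameCycle {ρ' : G.RotorConfig} (hC' : G.IsCycleOf ρ' C) (hC : G.IsCycleOf ρ C) :
    G.SameCycle ρ' ρ := by
  refine fun u => ⟨by rw [hC'.periodic_iff, hC.periodic_iff], fun hu => ?_⟩
  obtain ⟨d, hd, rfl⟩ := List.mem_map.mp (hC'.2 u hu)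
  rw [hC'.1 d hd, hC.1 d hd]

end IsCycleOf

end RibbonGraph

theorem reversibility_well_defined_general (G : RibbonGraph) (C : G.DirCycle)
    (ρ' : G.RotorConfig) (v' : G.V) (σ' : G.RotorConfig)
    (hC' : G.IsCycleOf ρ' C)
    (hσ' : G.IsReversal ρ' σ') (hreach' : G.Reaches (ρ', v') (σ', v')) :
    G.Reversible C := fun _ _ _ hC hv hR =>
  hreach'.reversal_of_sameCycle hσ' (hC'.sameCycle hC) (hC.unicycle hv) hR

/-- reversibility of a cycle is well-defined: if for some unicycle
`(ρ', v')` with unique directed cycle `C` the cycle-reversed state is reachable,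
then the same holds for every unicycle with unique directed cycle `C`. -/
theorem reversibility_well_defined (G : RibbonGraph) (C : G.DirCycle)
    (ρ' : G.RotorConfig) (v' : G.V) (σ' : G.RotorConfig)
    (hC' : G.IsCycleOf ρ' C) (hv' : v' ∈ G.cverts C)
    (hσ' : G.IsReversal ρ' σ') (hreach' : G.Reaches (ρ', v') (σ', v')) :
    G.Reversible C :=
  reversibility_well_defined_general G C ρ' v' σ' hC' hσ' hreach'
end

section
/- Rotor-routing computes the sandpile action: let T be a spanning tree of a ribbon graph G, let e be an edge from y to x not in T, and let s be any vertex on the T-geodesic from x to y (including the endpoints). Set ρ = T_y ⊔ e (the tree oriented toward y with the extra rotor e at y). Then (ρ, s) is a unicycle, and if σ is defined by running rotor-routing from (ρ, s) until the chip first returns to y with σ[y] = ρ[y], then deleting the rotor at y from σ yields the spanning tree (s − y)_y(T), the image of T under the rotor-routing action of the divisor s − y with basepoint y. -/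
namespace RibbonGraph

variable (G : RibbonGraph)

/-- Off the chip position, one rotor-routing step does not change `cfgStep`. -/
lemma cfgStep_rrStep_ne (p : G.RotorConfig × G.V) (v : G.V) (hv : v ≠ p.2) :
    G.cfgStep (G.rrStep p).1 v = G.cfgStep p.1 v := by
  simp [cfgStep, rrStep, hv]

/-- At the chip position, `cfgStep` after the step gives the new chip position. -/
lemma cfgStep_rrStep_self (p : G.RotorConfig × G.V) :
    G.cfgStep (G.rrStep p).1 p.2 = (G.rrStep p).2 := by
  simp [cfgStep, rrStep]

/-- The key invariant step: if every vertex reaches the chip or `y`, this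
persists after one rotor-routing step. -/
lemma invariant_step (ρ : G.RotorConfig) (c y : G.V)
    (h : ∀ v, ∃ n : ℕ, (G.cfgStep ρ)^[n] v = c ∨ (G.cfgStep ρ)^[n] v = y) (v : G.V) :
    ∃ n : ℕ, (G.cfgStep (G.rrStep (ρ, c)).1)^[n] v = (G.rrStep (ρ, c)).2 ∨
         (G.cfgStep (G.rrStep (ρ, c)).1)^[n] v = y := by
  classical
  have hv := h v
  set n := Nat.find hv with hndef
  have hn : (G.cfgStep ρ)^[n] v = c ∨ (G.cfgStep ρ)^[n] v = y := Nat.find_spec hv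
  have hmin : ∀ j, j < n → ¬((G.cfgStep ρ)^[j] v = c ∨ (G.cfgStep ρ)^[j] v = y) :=
    fun j hj => Nat.find_min hv hj
  have heq : ∀ j, j ≤ n → (G.cfgStep (G.rrStep (ρ, c)).1)^[j] v = (G.cfgStep ρ)^[j] v := by
    intro j hj
    induction j with
    | zero => rfl
    | succ j ih =>
      have hj' : j < n := hj
      rw [Function.iterate_succ_apply', Function.iterate_succ_apply', ih (le_of_lt hj')]
      exact G.cfgStep_rrStep_ne (ρ, c) _ (fun hc => hmin j hj' (Or.inl hc))
  rcases hn with hc | hy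
  · refine ⟨n + 1, Or.inl ?_⟩
    rw [Function.iterate_succ_apply', heq n le_rfl, hc]
    exact G.cfgStep_rrStep_self (ρ, c)
  · exact ⟨n, Or.inr (by rw [heq n le_rfl, hy])⟩

/-- The invariant iterated: after any number of rotor-routing steps from a
configuration in which every vertex reaches `y`, every vertex reaches the chip
or `y`. -/
lemma invariant_iter (ρ : G.RotorConfig) (s y : G.V)
    (h : ∀ v, ∃ n : ℕ, (G.cfgStep ρ)^[n] v = y) (m : ℕ) (v : G.V) :
    ∃ n : ℕ, (G.cfgStep ((G.rrStep)^[m] (ρ, s)).1)^[n] v = ((G.rrStep)^[m] (ρ, s)).2 ∨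
         (G.cfgStep ((G.rrStep)^[m] (ρ, s)).1)^[n] v = y := by
  induction m generalizing v with
  | zero => exact (h v).imp (fun n hn => Or.inr hn)
  | succ m ih =>
    rw [Function.iterate_succ_apply']
    have h2 := G.invariant_step ((G.rrStep)^[m] (ρ, s)).1 ((G.rrStep)^[m] (ρ, s)).2 y ih v
    simpa using h2

/-- An iterate of a periodic vertex is periodic. -/
lemma periodic_iterate (ρ : G.RotorConfig) (v : G.V) (hv : G.Periodic ρ v) (j : ℕ) :
    G.Periodic ρ ((G.cfgStep ρ)^[j] v) := by
  obtain ⟨m, hm, hmv⟩ := hv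
  exact ⟨m, hm, by
    rw [← Function.iterate_add_apply, Nat.add_comm, Function.iterate_add_apply, hmv]⟩

end RibbonGraph

/-- rotor-routing computes the sandpile action.  Let `T` be a
spanning tree, `e` a dart from `y` to `x` not in `T`, and `ρ` the rotor
configuration consisting of `T` oriented toward `y` together with the rotor `e`
at `y`.  Let `s` be any vertex on the `T`-geodesic from `x` to `y` (endpoints
included), i.e. on the rotor path from `x` up to its first arrival at `y`.
Then `(ρ, s)` is a unicycle, and if rotor-routing from `(ρ, s)` first brings the
chip to `y` in state `(σ, y)`, then deleting the rotor at `y` from `σ` yields the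
spanning tree `(s - y)_y(T)`. -/
theorem rotor_routing_computes_action (G : RibbonGraph) (T : G.SpanningTree)
    (e : G.D) (x y s : G.V) (hsrc : G.src e = y) (htgt : G.tgt e = x)
    (he : e ∉ T.edges) (ρ : G.RotorConfig) (hρy : ρ.1 y = e)
    (htree : ∀ v, v ≠ y → ρ.1 v ∈ T.edges)
    (htoward : ∀ v, ∃ n : ℕ, (G.cfgStep ρ)^[n] v = y)
    (hs : ∃ k : ℕ, (∀ j, j < k → (G.cfgStep ρ)^[j] x ≠ y) ∧ (G.cfgStep ρ)^[k] x = s) :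
    G.Unicycle (ρ, s) ∧
    ∀ (n : ℕ) (σ : G.RotorConfig),
      (∀ k, k < n → ((G.rrStep)^[k] (ρ, s)).2 ≠ y) →
      (G.rrStep)^[n] (ρ, s) = (σ, y) →
      ∀ T' : G.SpanningTree, (∀ v, v ≠ y → σ.1 v ∈ T'.edges) →
        G.RRAct y s T T' := by
  -- `y` is periodic: `cfgStep ρ y = x` and `x` reaches `y`.
  have hstepy : G.cfgStep ρ y = x := by
    simp [RibbonGraph.cfgStep, hρy, htgt]
  have hyper : G.Periodic ρ y := by
    obtain ⟨k, hk⟩ := htoward x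
    refine ⟨k + 1, Nat.succ_pos k, ?_⟩
    rw [Function.iterate_succ_apply, hstepy, hk]
  constructor
  · constructor
    · -- `s` is periodic: it is an iterate of the periodic vertex `y`.
      obtain ⟨k, -, hk⟩ := hs
      have : s = (G.cfgStep ρ)^[k + 1] y := by
        rw [Function.iterate_succ_apply, hstepy, hk]
      rw [this]
      exact G.periodic_iterate ρ y hyper (k + 1)
    · -- any periodic vertex reaches any other: both reach `y`, and `y`
      -- returns to any periodic vertex.
      intro u w hu hw
      obtain ⟨a, ha⟩ := htoward u
      obtain ⟨b, hb⟩ := htoward w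
      obtain ⟨m, hm0, hmw⟩ := hw
      have hbm : (G.cfgStep ρ)^[b * m] w = w := by
        rw [Nat.mul_comm, Function.iterate_mul]
        clear hb
        induction b with
        | zero => rfl
        | succ b ih => rw [Function.iterate_succ_apply, hmw, ih]
      have hyw : (G.cfgStep ρ)^[b * (m - 1)] y = w := by
        rw [← hb, ← Function.iterate_add_apply]
        have : b * (m - 1) + b = b * m := by
          cases m with
          | zero => omega
          | succ m => rw [Nat.succ_sub_one]; ring
        rw [this, hbm]
      exact ⟨b * (m - 1) + a, by rw [Function.iterate_add_apply, ha, hyw]⟩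
  · intro n σ hfirst heqn T' hT'
    refine ⟨ρ, ⟨htree, htoward⟩, n, hfirst, by rw [heqn], ?_⟩
    rw [heqn]
    exact ⟨hT', fun v => by
      have h := G.invariant_iter ρ s y htoward n v
      rw [heqn] at h
      obtain ⟨m, hm | hm⟩ := h <;> exact ⟨m, hm⟩⟩
end
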